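/- Let B = [[B₁,B₃],[B₂,B₄]] be an (n+m)×(n+m) skew-symmetrizable integer matrix with B₂ ∈ M_{m×n}(ℤ_{≥0}). If the sequence (k_1,…,k_s,k_{s+1},…,k_{s+p}) with k_1,…,k_s ∈ {1,…,n} and k_{s+1},…,k_{s+p} ∈ {n+1,…,n+m} is a maximal green sequence of B, then (k_1,…,k_s) is a maximal green sequence of B₁ and (k_{s+1}−n,…,k_{s+p}−n) is a maximal green sequence of B₄. -/

import Mathlib

variable {ι : Type} [Fintype ι] [DecidableEq ι]

/-- Mutation in direction `k` of a `2N × N` integer matrix, rows indexed by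
`ι ⊕ ι` (the principal part is the `Sum.inl` block). -/
def mutate (k : ι) (B : Matrix (ι ⊕ ι) ι ℤ) : Matrix (ι ⊕ ι) ι ℤ :=
  fun i j =>
    if i = Sum.inl k ∨ j = k then -B i j
    else B i j + Int.sign (B i k) * max (B i k * B (Sum.inl k) j) 0

/-- Apply a sequence of mutations `μ_{k_s} ⋯ μ_{k_1}` (the list is `[k_1, …, k_s]`). -/
def mutateSeq (L : List ι) (B : Matrix (ι ⊕ ι) ι ℤ) : Matrix (ι ⊕ ι) ι ℤ :=
  L.foldl (fun M k => mutate k M) B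

/-- The C-matrix of `B` along the mutation sequence `L`: the lower block of
the mutation of `[B; I]`. -/
def Cmat (B : Matrix ι ι ℤ) (L : List ι) : Matrix ι ι ℤ :=
  fun i j => mutateSeq L (Matrix.fromRows B 1) (Sum.inr i) j

/-- A column index `j` is green in the C-matrix along `L` if its column is entrywise `≥ 0`. -/
def IsGreen (B : Matrix ι ι ℤ) (L : List ι) (j : ι) : Prop :=
  ∀ i, 0 ≤ Cmat B L i j

/-- `L` is a green sequence: each mutation occurs at a green index of the current C-matrix. -/
def IsGreenSeq (B : Matrix ι ι ℤ) (L : List ι) : Prop :=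
  ∀ (t : ℕ) (h : t < L.length), IsGreen B (L.take t) (L.get ⟨t, h⟩)

/-- `L` is a green-to-red sequence: the final C-matrix is entrywise `≤ 0`. -/
def IsGreenToRed (B : Matrix ι ι ℤ) (L : List ι) : Prop :=
  ∀ i j, Cmat B L i j ≤ 0

/-- `L` is a maximal green sequence of `B`. -/
def IsMGS (B : Matrix ι ι ℤ) (L : List ι) : Prop :=
  IsGreenSeq B L ∧ IsGreenToRed B L


/-!
The entry `(i, j)` of `μ_k M` depends only on the entries `(i, j)`, `(i, k)` and `(k, j)` of `M`,
so mutations at indices of one diagonal block act on the principal part of that block exactly as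
the mutations of the block itself. The only thing to check is that the first phase
`μ_{k_s} ⋯ μ_{k_1}` leaves `[B₄; I]` in place: the `B₂` block evolves as `B₂ C₁`, which is
nonnegative at every green index because `B₂ ≥ 0`; skew-symmetrizability then makes the matching
entries of the `B₃` block nonpositive, so no `B₄` entry changes. Finally, `C₁` is already red after
the first phase, since the green mutations of the second phase only increase the C-matrix entries
outside their own columns.
-/

section Mutation

variable {ι κ : Type} [DecidableEq ι] [DecidableEq κ]

lemma two_mul_sign_mul_max (x y : ℤ) :
    2 * (Int.sign x * max (x * y) 0) = |x| * y + x * |y| := by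
  rcases lt_trichotomy x 0 with hx | rfl | hx
  · rw [Int.sign_eq_neg_one_of_neg hx, abs_of_neg hx]
    rcases le_total y 0 with hy | hy
    · rw [max_eq_left (by nlinarith), abs_of_nonpos hy]; ring
    · rw [max_eq_right (by nlinarith), abs_of_nonneg hy]; ring
  · simp
  · rw [Int.sign_eq_one_of_pos hx, abs_of_pos hx]
    rcases le_total y 0 with hy | hy
    · rw [max_eq_right (by nlinarith), abs_of_nonpos hy]; ring
    · rw [max_eq_left (by nlinarith), abs_of_nonneg hy]; ring

lemma sign_mul_max_of_nonneg {x : ℤ} (hx : 0 ≤ x) (y : ℤ) :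
    Int.sign x * max (x * y) 0 = x * max y 0 := by
  rcases hx.lt_or_eq with hx | rfl
  · rw [Int.sign_eq_one_of_pos hx, one_mul, mul_max_of_nonneg _ _ hx.le, mul_zero]
  · simp

lemma mutate_apply_self_right (k : ι) (M : Matrix (ι ⊕ ι) ι ℤ) (i : ι ⊕ ι) :
    mutate k M i k = -M i k := by
  simp [mutate]

lemma mutate_apply_of_ne {k j : ι} {i : ι ⊕ ι} (hi : i ≠ Sum.inl k) (hj : j ≠ k)
    (M : Matrix (ι ⊕ ι) ι ℤ) :
    mutate k M i j = M i j + Int.sign (M i k) * max (M i k * M (Sum.inl k) j) 0 := by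
  simp [mutate, hi, hj]

lemma mutate_row_of_eq_zero {k : ι} {i : ι ⊕ ι} (hi : i ≠ Sum.inl k)
    {M : Matrix (ι ⊕ ι) ι ℤ} (hM : M i k = 0) : mutate k M i = M i := by
  funext j
  by_cases hj : j = k
  · rw [hj, mutate_apply_self_right, hM, neg_zero]
  · rw [mutate_apply_of_ne hi hj, hM, Int.sign_zero, zero_mul, add_zero]

/-- Mutation at `k` acts on the rows `i ≠ k` with `M i k ≥ 0` by the same linear map. -/
lemma mutate_apply_eq_sum {α : Type} {s : Finset α} {c : α → ℤ} (hc : ∀ a ∈ s, 0 ≤ c a)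
    {q : α → ι ⊕ ι} {p : ι ⊕ ι} {k : ι} (hp : p ≠ Sum.inl k) (hq : ∀ a ∈ s, q a ≠ Sum.inl k)
    {M : Matrix (ι ⊕ ι) ι ℤ} (hqk : ∀ a ∈ s, 0 ≤ M (q a) k)
    (hpk : M p k = ∑ a ∈ s, c a * M (q a) k) {j : ι} (hpj : M p j = ∑ a ∈ s, c a * M (q a) j) :
    mutate k M p j = ∑ a ∈ s, c a * mutate k M (q a) j := by
  by_cases hj : j = k
  · subst hj
    simp only [mutate_apply_self_right, hpk, mul_neg, Finset.sum_neg_distrib]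
  have hpk_nonneg : 0 ≤ M p k := hpk ▸ Finset.sum_nonneg fun a ha => mul_nonneg (hc a ha) (hqk a ha)
  rw [mutate_apply_of_ne hp hj, sign_mul_max_of_nonneg hpk_nonneg, hpj, hpk, Finset.sum_mul,
    ← Finset.sum_add_distrib]
  refine Finset.sum_congr rfl fun a ha => ?_
  rw [mutate_apply_of_ne (hq a ha) hj, sign_mul_max_of_nonneg (hqk a ha)]
  ring

lemma mutateSeq_cons (k : ι) (L : List ι) (M : Matrix (ι ⊕ ι) ι ℤ) :
    mutateSeq (k :: L) M = mutateSeq L (mutate k M) := rfl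

lemma mutateSeq_append (L₁ L₂ : List ι) (M : Matrix (ι ⊕ ι) ι ℤ) :
    mutateSeq (L₁ ++ L₂) M = mutateSeq L₂ (mutateSeq L₁ M) :=
  List.foldl_append

lemma mutate_submatrix {e : κ → ι} (he : Function.Injective e) (k : κ)
    (M : Matrix (ι ⊕ ι) ι ℤ) :
    (mutate (e k) M).submatrix (Sum.map e e) e = mutate k (M.submatrix (Sum.map e e) e) := by
  ext (i | i) j <;> simp [mutate, he.eq_iff]

lemma mutateSeq_map_submatrix {e : κ → ι} (he : Function.Injective e) :
    ∀ (L : List κ) (M : Matrix (ι ⊕ ι) ι ℤ),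
      (mutateSeq (L.map e) M).submatrix (Sum.map e e) e
        = mutateSeq L (M.submatrix (Sum.map e e) e)
  | [], _ => rfl
  | k :: L, M => by
    rw [List.map_cons, mutateSeq_cons, mutateSeq_cons, mutateSeq_map_submatrix he,
      mutate_submatrix he]

lemma fromRows_one_submatrix {e : κ → ι} (he : Function.Injective e) (B : Matrix ι ι ℤ) :
    (Matrix.fromRows B 1).submatrix (Sum.map e e) e
      = Matrix.fromRows (B.submatrix e e) (1 : Matrix κ κ ℤ) := by
  ext (i | i) j <;> simp [Matrix.one_apply, he.eq_iff]

def IsSkewSymmetrizer (S : ι → ℤ) (M : Matrix (ι ⊕ ι) ι ℤ) : Prop :=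
  ∀ i j, S i * M (Sum.inl i) j = -(S j * M (Sum.inl j) i)

lemma IsSkewSymmetrizer.mutate {S : ι → ℤ} (hS : ∀ i, 0 < S i) {M : Matrix (ι ⊕ ι) ι ℤ}
    (h : IsSkewSymmetrizer S M) (k : ι) : IsSkewSymmetrizer S (mutate k M) := by
  intro i j
  by_cases hijk : i = k ∨ j = k
  · have hi : Sum.inl i = (Sum.inl k : ι ⊕ ι) ∨ j = k := by simpa using hijk
    have hj : Sum.inl j = (Sum.inl k : ι ⊕ ι) ∨ i = k := by simpa [or_comm] using hijk
    simp only [_root_.mutate, if_pos hi, if_pos hj, h i j, neg_neg, mul_neg]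
  have hi : ¬(Sum.inl i = (Sum.inl k : ι ⊕ ι) ∨ j = k) := by simpa using hijk
  have hj : ¬(Sum.inl j = (Sum.inl k : ι ⊕ ι) ∨ i = k) := by simpa [or_comm] using hijk
  simp only [_root_.mutate, if_neg hi, if_neg hj]
  set x := M (Sum.inl i) k
  set y := M (Sum.inl k) j
  set u := M (Sum.inl j) k
  set v := M (Sum.inl k) i
  have hxv : S i * |x| = S k * |v| := by
    simpa [abs_mul, abs_of_pos (hS i), abs_of_pos (hS k)] using congrArg abs (h i k)
  have hyu : S k * |y| = S j * |u| := by
    simpa [abs_mul, abs_of_pos (hS k), abs_of_pos (hS j)] using congrArg abs (h k j)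
  -- times `2 S k`, both increments are `|x| y + x |y|`-terms that the skew relations match
  apply mul_left_cancel₀ (mul_ne_zero two_ne_zero (hS k).ne')
  linear_combination 2 * S k * h i j + S k * S i * two_mul_sign_mul_max x y
    + S k * S j * two_mul_sign_mul_max u v + S k * y * hxv + S k * |v| * h k j
    + S i * x * hyu + S j * |u| * h i k

def IsGreenSeqFrom : Matrix (ι ⊕ ι) ι ℤ → List ι → Prop
  | _, [] => True
  | M, k :: L => (∀ i, 0 ≤ M (Sum.inr i) k) ∧ IsGreenSeqFrom (mutate k M) L

lemma isGreenSeqFrom_append (L₁ L₂ : List ι) :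
    ∀ M : Matrix (ι ⊕ ι) ι ℤ, IsGreenSeqFrom M (L₁ ++ L₂)
      ↔ IsGreenSeqFrom M L₁ ∧ IsGreenSeqFrom (mutateSeq L₁ M) L₂ := by
  induction L₁ with
  | nil => simp [IsGreenSeqFrom, mutateSeq]
  | cons k L ih => simp [IsGreenSeqFrom, ih, mutateSeq_cons, and_assoc]

lemma IsGreenSeqFrom.submatrix {e : κ → ι} (he : Function.Injective e) :
    ∀ {L : List κ} {M : Matrix (ι ⊕ ι) ι ℤ}, IsGreenSeqFrom M (L.map e) →
      IsGreenSeqFrom (M.submatrix (Sum.map e e) e) L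
  | [], _, _ => trivial
  | _ :: _, _, ⟨hk, hL⟩ => ⟨fun i => hk (e i), by rw [← mutate_submatrix he]; exact hL.submatrix he⟩

lemma IsGreenSeqFrom.le_mutateSeq {i j : ι} :
    ∀ {L : List ι} {M : Matrix (ι ⊕ ι) ι ℤ}, IsGreenSeqFrom M L → j ∉ L →
      M (Sum.inr i) j ≤ mutateSeq L M (Sum.inr i) j
  | [], _, _, _ => le_rfl
  | k :: _, M, ⟨hk, hL⟩, hj => by
    have hjk : j ≠ k := fun h => hj (h ▸ List.mem_cons_self)
    calc M (Sum.inr i) j ≤ mutate k M (Sum.inr i) j := by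
          rw [mutate_apply_of_ne Sum.inr_ne_inl hjk, sign_mul_max_of_nonneg (hk i)]
          exact le_add_of_nonneg_right (mul_nonneg (hk i) (le_max_right _ _))
      _ ≤ _ := hL.le_mutateSeq (fun h => hj (List.mem_cons_of_mem k h))

lemma isGreenSeq_iff (B : Matrix ι ι ℤ) (L : List ι) :
    IsGreenSeq B L ↔ IsGreenSeqFrom (Matrix.fromRows B 1) L := by
  suffices ∀ M : Matrix (ι ⊕ ι) ι ℤ, (∀ (t : ℕ) (h : t < L.length) (i : ι),
      0 ≤ mutateSeq (L.take t) M (Sum.inr i) (L.get ⟨t, h⟩)) ↔ IsGreenSeqFrom M L from this _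
  induction L with
  | nil => simp [IsGreenSeqFrom]
  | cons k L ih =>
    intro M
    rw [IsGreenSeqFrom, ← ih]
    constructor
    · intro h
      exact ⟨h 0 (by simp), fun t ht => h (t + 1) (by simpa using ht)⟩
    · rintro ⟨h₀, h⟩ (_ | t) ht
      exacts [h₀, h t (by simpa using ht)]

lemma isGreenSeq_of_submatrix {e : κ → ι} (he : Function.Injective e) {M : Matrix (ι ⊕ ι) ι ℤ}
    {B : Matrix κ κ ℤ} (hM : M.submatrix (Sum.map e e) e = Matrix.fromRows B 1) {L : List κ}
    (h : IsGreenSeqFrom M (L.map e)) : IsGreenSeq B L := by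
  rw [isGreenSeq_iff, ← hM]
  exact h.submatrix he

lemma cmat_eq_of_submatrix {e : κ → ι} (he : Function.Injective e) {M : Matrix (ι ⊕ ι) ι ℤ}
    {B : Matrix κ κ ℤ} (hM : M.submatrix (Sum.map e e) e = Matrix.fromRows B 1) (L : List κ)
    (i j : κ) : Cmat B L i j = mutateSeq (L.map e) M (Sum.inr (e i)) (e j) := by
  rw [Cmat, ← hM, ← mutateSeq_map_submatrix he]
  rfl

end Mutation

section Blocks

open Sum

variable {n m : ℕ} (B : Matrix (Fin n ⊕ Fin m) (Fin n ⊕ Fin m) ℤ) (S : Fin n ⊕ Fin m → ℤ)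

structure FirstBlockInvariant (M : Matrix ((Fin n ⊕ Fin m) ⊕ (Fin n ⊕ Fin m)) (Fin n ⊕ Fin m) ℤ) :
    Prop where
  skew : IsSkewSymmetrizer S M
  unit_rows : ∀ b, M (inr (inr b)) = (1 : Matrix (Fin n ⊕ Fin m) (Fin n ⊕ Fin m) ℤ) (inr b)
  row_eq_sum : ∀ b j, M (inl (inr b)) (inl j) = ∑ i, B (inr b) (inl i) * M (inr (inl i)) (inl j)
  fourth_block : ∀ b b', M (inl (inr b)) (inr b') = B (inr b) (inr b')

variable {B S}

lemma firstBlockInvariant_fromRows (hskew : ∀ i j, S i * B i j = -(S j * B j i)) :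
    FirstBlockInvariant B S (Matrix.fromRows B 1) where
  skew := hskew
  unit_rows _ := rfl
  row_eq_sum b j := by simp [Matrix.one_apply]
  fourth_block _ _ := rfl

lemma FirstBlockInvariant.mutate_inl (hS : ∀ i, 0 < S i)
    (hB₂ : ∀ (i : Fin m) (j : Fin n), 0 ≤ B (inr i) (inl j))
    {M : Matrix ((Fin n ⊕ Fin m) ⊕ (Fin n ⊕ Fin m)) (Fin n ⊕ Fin m) ℤ}
    (h : FirstBlockInvariant B S M) {k : Fin n} (hk : ∀ i, 0 ≤ M (inr i) (inl k)) :
    FirstBlockInvariant B S (mutate (inl k) M) := by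
  have hBk : ∀ b, 0 ≤ M (inl (inr b)) (inl k) := fun b => by
    rw [h.row_eq_sum]
    exact Finset.sum_nonneg fun i _ => mul_nonneg (hB₂ b i) (hk _)
  refine ⟨h.skew.mutate hS _, fun b => ?_, fun b j => ?_, fun b b' => ?_⟩
  · rw [mutate_row_of_eq_zero Sum.inr_ne_inl (by simp [h.unit_rows]), h.unit_rows]
  · exact mutate_apply_eq_sum (fun i _ => hB₂ b i) (by simp) (by simp) (fun i _ => hk _)
      (h.row_eq_sum b k) (h.row_eq_sum b j)
  · have hkb' : M (inl (inl k)) (inr b') ≤ 0 := by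
      refine nonpos_of_mul_nonpos_right ?_ (hS (inl k))
      rw [h.skew]
      exact neg_nonpos.2 (mul_nonneg (hS _).le (hBk b'))
    rw [mutate_apply_of_ne (by simp) (by simp), sign_mul_max_of_nonneg (hBk b), max_eq_right hkb',
      mul_zero, add_zero, h.fourth_block]

lemma FirstBlockInvariant.mutateSeq_map_inl (hS : ∀ i, 0 < S i)
    (hB₂ : ∀ (i : Fin m) (j : Fin n), 0 ≤ B (inr i) (inl j)) :
    ∀ {ks : List (Fin n)} {M : Matrix ((Fin n ⊕ Fin m) ⊕ (Fin n ⊕ Fin m)) (Fin n ⊕ Fin m) ℤ},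
      FirstBlockInvariant B S M → IsGreenSeqFrom M (ks.map inl) →
        FirstBlockInvariant B S (mutateSeq (ks.map inl) M)
  | [], _, h, _ => h
  | _ :: _, _, h, ⟨hk, hks⟩ => (h.mutate_inl hS hB₂ hk).mutateSeq_map_inl hS hB₂ hks

lemma FirstBlockInvariant.submatrix_inr
    {M : Matrix ((Fin n ⊕ Fin m) ⊕ (Fin n ⊕ Fin m)) (Fin n ⊕ Fin m) ℤ}
    (h : FirstBlockInvariant B S M) :
    M.submatrix (Sum.map inr inr) inr = Matrix.fromRows (B.submatrix inr inr) 1 := by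
  ext (b | b) b'
  · simp [h.fourth_block]
  · simp [h.unit_rows, Matrix.one_apply]

end Blocks

/-- If a concatenated sequence (first mutating in the first block, then in the second)
is a maximal green sequence of `B` and the bottom-left block is nonnegative, then the
two halves are maximal green sequences of the corresponding diagonal blocks. -/
theorem mgs_to_blocks {n m : ℕ}
    (B : Matrix (Fin n ⊕ Fin m) (Fin n ⊕ Fin m) ℤ)
    (S : Fin n ⊕ Fin m → ℤ) (hS : ∀ i, 0 < S i)
    (hskew : ∀ i j, S i * B i j = -(S j * B j i))
    (hB₂ : ∀ (i : Fin m) (j : Fin n), 0 ≤ B (Sum.inr i) (Sum.inl j))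
    (ks : List (Fin n)) (js : List (Fin m))
    (h : IsMGS B (ks.map Sum.inl ++ js.map Sum.inr)) :
    IsMGS (fun i j => B (Sum.inl i) (Sum.inl j)) ks ∧
      IsMGS (fun i j => B (Sum.inr i) (Sum.inr j)) js := by
  obtain ⟨hgreen, hred⟩ := h
  rw [isGreenSeq_iff, isGreenSeqFrom_append] at hgreen
  obtain ⟨hgreen₁, hgreen₄⟩ := hgreen
  have hB₁ : (Matrix.fromRows B 1).submatrix (Sum.map Sum.inl Sum.inl) Sum.inl
      = Matrix.fromRows (fun i j => B (Sum.inl i) (Sum.inl j)) 1 :=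
    fromRows_one_submatrix Sum.inl_injective B
  have hB₄ : (mutateSeq (ks.map Sum.inl) (Matrix.fromRows B 1)).submatrix
      (Sum.map Sum.inr Sum.inr) Sum.inr
      = Matrix.fromRows (fun i j => B (Sum.inr i) (Sum.inr j)) 1 :=
    ((firstBlockInvariant_fromRows hskew).mutateSeq_map_inl hS hB₂ hgreen₁).submatrix_inr
  refine ⟨⟨isGreenSeq_of_submatrix Sum.inl_injective hB₁ hgreen₁, fun i j => ?_⟩,
    isGreenSeq_of_submatrix Sum.inr_injective hB₄ hgreen₄, fun i j => ?_⟩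
  · rw [cmat_eq_of_submatrix Sum.inl_injective hB₁]
    refine (hgreen₄.le_mutateSeq (by simp)).trans ?_
    rw [← mutateSeq_append]
    exact hred (Sum.inl i) (Sum.inl j)
  · rw [cmat_eq_of_submatrix Sum.inr_injective hB₄, ← mutateSeq_append]
    exact hred (Sum.inr i) (Sum.inr j)
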